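/- arXiv:2102.11253 — 2 statements merged into one kernel-verified Lean document; each statement's English description precedes it below -/
import Mathlib

section
/- Fix ρ ∈ [0,1] and r ∈ (−1, ∞) with r ≠ 0. Let Z_0, Z_1, Z_2, … be i.i.d. standard normal random variables and set p_i = Φ(−√ρ·Z_0 − √(1−ρ)·Z_i) for i ≥ 1. Let C ∈ ℝ satisfy Pr( g_{ρ,r}(Z_0) = C ) = 0, where sign(r) = 1 if r > 0 and −1 if r < 0. Then lim_{m→∞} Pr( sign(r)·(1/m) Σ_{i=1}^m p_i^r ≤ sign(r)·C ) = Pr( sign(r)·g_{ρ,r}(Z_0) ≤ sign(r)·C ). -/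
/-!
Conditionally on `Z₀ = z`, the `p`-values are i.i.d. with `E[p₁^r] = g_{ρ,r}(z)`, finite for
`r > -1` because of the Gaussian lower bound `Φ(u) ≥ φ(|u| + 1)`. So the strong law holds for each
fixed value `z`; since `Z₀` is independent of `(Zᵢ)_{i ≥ 1}`, Fubini on the joint law transfers it
to `z = Z₀`, i.e. the averages converge almost surely to `g_{ρ,r}(Z₀)`. Almost sure convergence
gives convergence of `Pr(Wₘ ≤ c)` at every `c` that is not an atom of the limit.
-/

open MeasureTheory ProbabilityTheory Filter

/-- Standard normal CDF `Φ`. -/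
noncomputable def Phi (x : ℝ) : ℝ := ((gaussianReal 0 1 : Measure ℝ) (Set.Iic x)).toReal

/-- `g_{ρ,r}(z) = E[p₁^r | Z₀ = z] = ∫ Φ(-√ρ z - √(1-ρ) x)^r φ(x) dx`. -/
noncomputable def gFun (ρ r z : ℝ) : ℝ :=
  ∫ x : ℝ, Phi (-(Real.sqrt ρ * z) - Real.sqrt (1 - ρ) * x) ^ r
    ∂(gaussianReal 0 1 : Measure ℝ)

open Finset Topology

theorem monotone_Phi : Monotone Phi := fun _ _ hab =>
  ENNReal.toReal_mono (measure_ne_top _ _) (measure_mono (Set.Iic_subset_Iic.2 hab))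

@[fun_prop]
theorem measurable_Phi : Measurable Phi := monotone_Phi.measurable

theorem Phi_nonneg (x : ℝ) : 0 ≤ Phi x := ENNReal.toReal_nonneg

theorem Phi_le_one (x : ℝ) : Phi x ≤ 1 :=
  ENNReal.toReal_le_of_le_ofReal zero_le_one (by simpa using prob_le_one)

theorem exp_neg_sq_le_Phi (u : ℝ) :
    (Real.sqrt (2 * Real.pi))⁻¹ * Real.exp (-(|u| + 1) ^ 2 / 2) ≤ Phi u := by
  have hpdf : ∀ t ∈ Set.Icc (u - 1) u,
      (Real.sqrt (2 * Real.pi))⁻¹ * Real.exp (-(|u| + 1) ^ 2 / 2) ≤ gaussianPDFReal 0 1 t := by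
    intro t ht
    have ht' : |t| ≤ |u| + 1 :=
      abs_le.2 ⟨by linarith [ht.1, neg_abs_le u], by linarith [ht.2, le_abs_self u]⟩
    simp only [gaussianPDFReal, NNReal.coe_one, mul_one, sub_zero]
    gcongr _ * Real.exp ?_
    nlinarith [abs_nonneg t, sq_abs t]
  calc (Real.sqrt (2 * Real.pi))⁻¹ * Real.exp (-(|u| + 1) ^ 2 / 2)
      = ∫ _ in Set.Icc (u - 1) u, (Real.sqrt (2 * Real.pi))⁻¹ * Real.exp (-(|u| + 1) ^ 2 / 2) := by
        simp [measureReal_def, Real.volume_Icc]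
    _ ≤ ∫ t in Set.Icc (u - 1) u, gaussianPDFReal 0 1 t :=
        setIntegral_mono_on (integrableOn_const (by simp [Real.volume_Icc]))
          (integrable_gaussianPDFReal 0 1).integrableOn measurableSet_Icc hpdf
    _ ≤ ∫ t in Set.Iic u, gaussianPDFReal 0 1 t :=
        setIntegral_mono_set (integrable_gaussianPDFReal 0 1).integrableOn
          (ae_of_all _ fun t => gaussianPDFReal_nonneg _ _ _)
          (Set.Icc_subset_Iic_self.eventuallyLE)
    _ = Phi u := by
        rw [Phi, gaussianReal_apply_eq_integral 0 one_ne_zero, ENNReal.toReal_ofReal]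
        exact setIntegral_nonneg measurableSet_Iic fun t _ => gaussianPDFReal_nonneg _ _ _

theorem integrable_exp_mul_sq_gaussianReal {c : ℝ} (hc : c < 1 / 2) :
    Integrable (fun x => Real.exp (c * x ^ 2)) (gaussianReal 0 1) := by
  rw [gaussianReal_of_var_ne_zero 0 one_ne_zero, integrable_withDensity_iff
    (measurable_gaussianPDF 0 1) (ae_of_all _ fun x => ENNReal.ofReal_lt_top)]
  have heq : (fun x => Real.exp (c * x ^ 2) * (gaussianPDF 0 1 x).toReal)
      = fun x => (Real.sqrt (2 * Real.pi))⁻¹ * Real.exp (-(1 / 2 - c) * x ^ 2) := by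
    funext x
    rw [gaussianPDF, ENNReal.toReal_ofReal (gaussianPDFReal_nonneg _ _ _), gaussianPDFReal]
    push_cast
    rw [mul_one, mul_comm (Real.exp _), mul_assoc, ← Real.exp_add]
    ring_nf
  rw [heq]
  exact (integrable_exp_neg_mul_sq (by linarith)).const_mul _

theorem exists_mul_add_sq_le {s s' : ℝ} (hss' : s < s') (B : ℝ) :
    ∃ D, ∀ t, s * (B + t) ^ 2 ≤ s' * t ^ 2 + D := by
  refine ⟨s * B ^ 2 + s ^ 2 * B ^ 2 / (s' - s), fun t => ?_⟩
  have hd : 0 < s' - s := sub_pos.2 hss'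
  have hamgm : 2 * s * B * t ≤ (s' - s) * t ^ 2 + s ^ 2 * B ^ 2 / (s' - s) := by
    rw [← sub_le_iff_le_add', le_div_iff₀ hd]
    nlinarith [sq_nonneg ((s' - s) * t - s * B)]
  nlinarith

theorem Phi_rpow_le_of_nonpos {r : ℝ} (hr : r ≤ 0) (u : ℝ) :
    Phi u ^ r ≤ (Real.sqrt (2 * Real.pi))⁻¹ ^ r * Real.exp (-r * (|u| + 1) ^ 2 / 2) := by
  calc Phi u ^ r
      ≤ ((Real.sqrt (2 * Real.pi))⁻¹ * Real.exp (-(|u| + 1) ^ 2 / 2)) ^ r :=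
        Real.rpow_le_rpow_of_nonpos (by positivity) (exp_neg_sq_le_Phi u) hr
    _ = (Real.sqrt (2 * Real.pi))⁻¹ ^ r * Real.exp (-r * (|u| + 1) ^ 2 / 2) := by
        rw [Real.mul_rpow (by positivity) (Real.exp_nonneg _), ← Real.exp_mul]
        ring_nf

theorem integrable_Phi_rpow {r : ℝ} (hr : -1 < r) (a : ℝ) {b : ℝ} (hb : |b| ≤ 1) :
    Integrable (fun x => Phi (a - b * x) ^ r) (gaussianReal 0 1) := by
  have hm : AEStronglyMeasurable (fun x => Phi (a - b * x) ^ r) (gaussianReal 0 1) :=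
    (by fun_prop : Measurable fun x => Phi (a - b * x) ^ r).aestronglyMeasurable
  rcases le_or_gt r 0 with hneg | hpos
  · -- `Φ(u)^r ≲ exp(-r (|u| + 1)² / 2)` with `-r < 1` is dominated by `exp(c x²)`, `c < 1/2`.
    obtain ⟨D, hD⟩ := exists_mul_add_sq_le (show -r < (1 - r) / 2 by linarith) (|a| + 1)
    refine ((integrable_exp_mul_sq_gaussianReal (c := (1 - r) / 4) (by linarith)).const_mul
      ((Real.sqrt (2 * Real.pi))⁻¹ ^ r * Real.exp (D / 2))).mono' hm (ae_of_all _ fun x => ?_)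
    have hu : |a - b * x| + 1 ≤ |a| + 1 + |x| := by
      have := abs_sub a (b * x)
      rw [abs_mul] at this
      nlinarith [abs_nonneg x]
    have hexp : -r * (|a - b * x| + 1) ^ 2 / 2 ≤ D / 2 + (1 - r) / 4 * x ^ 2 := by
      have h1 := hD |x|
      rw [sq_abs] at h1
      have h2 : (|a - b * x| + 1) ^ 2 ≤ (|a| + 1 + |x|) ^ 2 := by gcongr
      nlinarith
    rw [Real.norm_of_nonneg (Real.rpow_nonneg (Phi_nonneg _) r), mul_assoc, ← Real.exp_add]
    exact (Phi_rpow_le_of_nonpos hneg _).trans (by gcongr)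
  · refine (integrable_const (1 : ℝ)).mono' hm (ae_of_all _ fun x => ?_)
    rw [Real.norm_of_nonneg (Real.rpow_nonneg (Phi_nonneg _) r)]
    exact Real.rpow_le_one (Phi_nonneg _) (Phi_le_one _) hpos.le

theorem measurable_gFun (ρ r : ℝ) : Measurable (gFun ρ r) :=
  (Measurable.stronglyMeasurable (by fun_prop :
    Measurable fun p : ℝ × ℝ => Phi (-(Real.sqrt ρ * p.1) - Real.sqrt (1 - ρ) * p.2) ^ r))
    |>.integral_prod_right' |>.measurable

section

variable {Ω α β : Type*} [MeasurableSpace Ω] [MeasurableSpace α] [mβ : MeasurableSpace β]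
  {μ : Measure Ω}

theorem ProbabilityTheory.iIndepFun.indepFun_zero_succ {Z : ℕ → Ω → β}
    (hZ : ∀ i, Measurable (Z i)) (h : iIndepFun Z μ) :
    IndepFun (Z 0) (fun ω n => Z (n + 1) ω) μ := by
  rw [IndepFun_iff_Indep]
  have hdisj : Disjoint ({0} : Set ℕ) (Set.range Nat.succ) := by
    simp [Set.disjoint_singleton_left]
  refine indep_of_indep_of_le_right (indep_of_indep_of_le_left
    (indep_iSup_of_disjoint (fun i => (hZ i).comap_le) ((iIndepFun_iff_iIndep _ _ _).1 h) hdisj)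
    (le_biSup (fun i => mβ.comap (Z i)) (Set.mem_singleton 0))) ?_
  simp only [MeasurableSpace.pi, MeasurableSpace.comap_iSup, MeasurableSpace.comap_comp]
  exact iSup_le fun n => le_biSup (fun i => mβ.comap (Z i)) (Set.mem_range_self n)

theorem ProbabilityTheory.IndepFun.ae_mem_of_forall_ae_mem [IsFiniteMeasure μ] {X : Ω → α}
    {Y : Ω → β} (hXY : IndepFun X Y μ) (hX : Measurable X) (hY : Measurable Y) {E : Set (α × β)}
    (hE : MeasurableSet E) (h : ∀ x, ∀ᵐ ω ∂μ, (x, Y ω) ∈ E) :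
    ∀ᵐ ω ∂μ, (X ω, Y ω) ∈ E := by
  have hmap := (indepFun_iff_map_prod_eq_prod_map_map hX.aemeasurable hY.aemeasurable).1 hXY
  have hprod : ∀ᵐ p ∂(μ.map X).prod (μ.map Y), p ∈ E :=
    (Measure.ae_prod_iff_ae_ae hE).2 <| ae_of_all _ fun x =>
      (ae_map_iff hY.aemeasurable (measurable_prodMk_left hE)).2 (h x)
  rw [← hmap] at hprod
  exact (ae_map_iff (hX.prodMk hY).aemeasurable hE).1 hprod

theorem strong_law_ae_comp {Y : ℕ → Ω → β} {ν : Measure β} (hY : ∀ i, Measurable (Y i))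
    (hindep : Pairwise fun i j => IndepFun (Y i) (Y j) μ) (hlaw : ∀ i, μ.map (Y i) = ν)
    {f : β → ℝ} (hf : Measurable f) (hfi : Integrable f ν) :
    ∀ᵐ ω ∂μ, Tendsto (fun n : ℕ => (∑ i ∈ range n, f (Y i ω)) / n) atTop (𝓝 (∫ y, f y ∂ν)) := by
  have hident : ∀ i, IdentDistrib (f ∘ Y i) (f ∘ Y 0) μ μ := fun i =>
    IdentDistrib.comp ⟨(hY i).aemeasurable, (hY 0).aemeasurable, by rw [hlaw, hlaw]⟩ hf
  have hint : Integrable (f ∘ Y 0) μ := by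
    rw [← hlaw 0] at hfi
    exact hfi.comp_measurable (hY 0)
  have hmean : ∫ ω, (f ∘ Y 0) ω ∂μ = ∫ y, f y ∂ν := by
    rw [← hlaw 0, integral_map (hY 0).aemeasurable hf.aestronglyMeasurable]
    rfl
  have h := strong_law_ae_real (fun i => f ∘ Y i) hint (fun i j hij => (hindep hij).comp hf hf)
    hident
  rw [hmean] at h
  exact h

theorem ae_tendsto_average_of_indepFun [IsFiniteMeasure μ] {X : Ω → α} {Y : ℕ → Ω → β}
    {ν : Measure β} (hX : Measurable X) (hY : ∀ i, Measurable (Y i))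
    (hXY : IndepFun X (fun ω n => Y n ω) μ)
    (hindep : Pairwise fun i j => IndepFun (Y i) (Y j) μ) (hlaw : ∀ i, μ.map (Y i) = ν)
    {F : α × β → ℝ} (hF : Measurable F) (hFi : ∀ x, Integrable (fun y => F (x, y)) ν) :
    ∀ᵐ ω ∂μ, Tendsto (fun n : ℕ => (∑ i ∈ range n, F (X ω, Y i ω)) / n) atTop
      (𝓝 (∫ y, F (X ω, y) ∂ν)) := by
  have : IsFiniteMeasure ν := hlaw 0 ▸ inferInstance
  let E : Set (α × (ℕ → β)) := {p | Tendsto (fun n : ℕ => (∑ i ∈ range n, F (p.1, p.2 i)) / n)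
    atTop (𝓝 (∫ y, F (p.1, y) ∂ν))}
  have hE : MeasurableSet E := by
    refine measurableSet_tendsto_fun (fun n => ?_) ?_
    · exact (Finset.measurable_sum _ fun i _ =>
        hF.comp (measurable_fst.prodMk ((measurable_pi_apply i).comp measurable_snd))).div_const _
    · exact (hF.comp (measurable_fst.fst.prodMk measurable_snd)).stronglyMeasurable
        |>.integral_prod_right' |>.measurable
  exact hXY.ae_mem_of_forall_ae_mem hX (measurable_pi_lambda _ hY) hE fun x =>
    strong_law_ae_comp hY hindep hlaw (hF.comp measurable_prodMk_left) (hFi x)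

theorem tendsto_measure_setOf_le_of_ae_tendsto [IsFiniteMeasure μ] {ι : Type*} {L : Filter ι}
    [L.IsCountablyGenerated] {W : ι → Ω → ℝ} {V : Ω → ℝ} {c : ℝ}
    (hW : ∀ i, Measurable (W i)) (hV : Measurable V)
    (hlim : ∀ᵐ ω ∂μ, Tendsto (fun i => W i ω) L (𝓝 (V ω))) (hc : ∀ᵐ ω ∂μ, V ω ≠ c) :
    Tendsto (fun i => μ {ω | W i ω ≤ c}) L (𝓝 (μ {ω | V ω ≤ c})) := by
  refine tendsto_measure_of_ae_tendsto_indicator_of_isFiniteMeasure L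
    (measurableSet_le hV measurable_const) (fun i => measurableSet_le (hW i) measurable_const) ?_
  filter_upwards [hlim, hc] with ω hω hωc
  rcases hωc.lt_or_gt with hlt | hgt
  · filter_upwards [hω.eventually_lt_const hlt] with i hi
    simp only [hi.le, hlt.le]
  · filter_upwards [hω.eventually_const_lt hgt] with i hi
    simp only [not_le.2 hi, not_le.2 hgt]

end

theorem stmt_11_general {Ω : Type*} [MeasurableSpace Ω] (μ : Measure Ω) [IsProbabilityMeasure μ]
    (ρ r : ℝ) (hρ : ρ ∈ Set.Icc (0:ℝ) 1) (hr : -1 < r)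
    (Z : ℕ → Ω → ℝ) (hmeas : ∀ i, Measurable (Z i))
    (hindep : iIndepFun Z μ)
    (hlaw : ∀ i, μ.map (Z i) = (gaussianReal 0 1 : Measure ℝ))
    (C : ℝ) (hC : μ {ω | gFun ρ r (Z 0 ω) = C} = 0)
    (sgn : ℝ) (hsgn : sgn = if 0 < r then 1 else -1) :
    Tendsto (fun m : ℕ =>
        μ {ω | sgn * ((1 / m : ℝ) * ∑ i ∈ Finset.Icc 1 m,
            Phi (-(Real.sqrt ρ * Z 0 ω) - Real.sqrt (1 - ρ) * Z i ω) ^ r) ≤ sgn * C})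
      atTop
      (nhds (μ {ω | sgn * gFun ρ r (Z 0 ω) ≤ sgn * C})) := by
  have hsgn0 : sgn ≠ 0 := by rw [hsgn]; split_ifs <;> norm_num
  have hb : |Real.sqrt (1 - ρ)| ≤ 1 := by
    rw [abs_of_nonneg (Real.sqrt_nonneg _)]
    exact Real.sqrt_le_one.2 (by linarith [hρ.1])
  have hlim := ae_tendsto_average_of_indepFun (hmeas 0) (fun i => hmeas (i + 1))
    (hindep.indepFun_zero_succ hmeas) (fun i j hij => hindep.indepFun (by simpa using hij))
    (fun i => hlaw (i + 1))
    (by fun_prop : Measurable fun p : ℝ × ℝ =>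
      Phi (-(Real.sqrt ρ * p.1) - Real.sqrt (1 - ρ) * p.2) ^ r)
    (fun z => integrable_Phi_rpow (a := -(Real.sqrt ρ * z)) hr hb)
  refine tendsto_measure_setOf_le_of_ae_tendsto (fun m => by fun_prop)
    (((measurable_gFun ρ r).comp (hmeas 0)).const_mul sgn) ?_ ?_
  · filter_upwards [hlim] with ω hω
    refine (hω.const_mul sgn).congr fun m => ?_
    rw [← Ico_add_one_right_eq_Icc, sum_Ico_eq_sum_range, Nat.add_sub_cancel, one_div,
      inv_mul_eq_div]
    simp only [add_comm 1]
  · filter_upwards [measure_eq_zero_iff_ae_notMem.1 hC] with ω hω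
    exact fun h => hω (mul_left_cancel₀ hsgn0 h)

/-- in the equicorrelated Gaussian null model,
`Pr(sign(r)·(1/m)Σ_{i=1}^m p_i^r ≤ sign(r)·C) → Pr(sign(r)·g_{ρ,r}(Z₀) ≤ sign(r)·C)`
as `m → ∞`, provided `Pr(g_{ρ,r}(Z₀) = C) = 0`. -/
theorem stmt_11 {Ω : Type*} [MeasurableSpace Ω] (μ : Measure Ω) [IsProbabilityMeasure μ]
    (ρ r : ℝ) (hρ : ρ ∈ Set.Icc (0:ℝ) 1) (hr : -1 < r) (hr0 : r ≠ 0)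
    (Z : ℕ → Ω → ℝ) (hmeas : ∀ i, Measurable (Z i))
    (hindep : iIndepFun Z μ)
    (hlaw : ∀ i, μ.map (Z i) = (gaussianReal 0 1 : Measure ℝ))
    (C : ℝ) (hC : μ {ω | gFun ρ r (Z 0 ω) = C} = 0)
    (sgn : ℝ) (hsgn : sgn = if 0 < r then 1 else -1) :
    Tendsto (fun m : ℕ =>
        μ {ω | sgn * ((1 / m : ℝ) * ∑ i ∈ Finset.Icc 1 m,
            Phi (-(Real.sqrt ρ * Z 0 ω) - Real.sqrt (1 - ρ) * Z i ω) ^ r) ≤ sgn * C})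
      atTop
      (nhds (μ {ω | sgn * gFun ρ r (Z 0 ω) ≤ sgn * C})) :=
  stmt_11_general μ ρ r hρ hr Z hmeas hindep hlaw C hC sgn hsgn
end

section
/- Fix r ≤ −1, ρ ∈ [0,1], α > 0, c > 0 and γ ∈ (0,1) with √c > 1 − √(γ(1−ρ)). Set μ_m = √(2c·log m) and π_m = m^{γ−1}. For each m, let Z_0, Z_1, …, Z_m be i.i.d. standard normal, let B_{m1}, …, B_{mm} be i.i.d. Bernoulli(π_m) independent of the Z's, and set p_{mi} = Φ(−μ_m·B_{mi} − √ρ·Z_0 − √(1−ρ)·Z_i). Let the rejection threshold be c_m = α·m^{1/|r| − 1} if r < −1 and c_m = α/(1 + α·log m) if r = −1. Then lim_{m→∞} Pr( ((1/m) Σ_{i=1}^m p_{mi}^r)^{1/r} ≤ c_m ) = 1. -/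
open MeasureTheory ProbabilityTheory Filter

/-- Bernoulli(π) law on `ℝ` (mass `π` at `1`, mass `1-π` at `0`). -/
noncomputable def bern (p : ℝ) : Measure ℝ :=
  ENNReal.ofReal p • Measure.dirac (1:ℝ) + ENNReal.ofReal (1 - p) • Measure.dirac (0:ℝ)

/-- Joint law at stage `m` of the equicorrelated Gaussian model: `m+1` i.i.d. standard
normals `Z₀,…,Z_m` together with `m` i.i.d. Bernoulli(π) signal indicators. -/
noncomputable def model (m : ℕ) (πp : ℝ) :
    Measure ((Fin (m + 1) → ℝ) × (Fin m → ℝ)) :=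
  (Measure.pi fun _ : Fin (m + 1) => (gaussianReal 0 1 : Measure ℝ)).prod
    (Measure.pi fun _ : Fin m => bern πp)

/-- The p-value `p_{mi} = Φ(-μ B_{mi} - √ρ Z₀ - √(1-ρ) Z_i)`. -/
noncomputable def pval (m : ℕ) (μs ρ : ℝ)
    (ω : (Fin (m + 1) → ℝ) × (Fin m → ℝ)) (i : Fin m) : ℝ :=
  Phi (-(μs * ω.2 i) - Real.sqrt ρ * ω.1 0 - Real.sqrt (1 - ρ) * ω.1 i.succ)

/-- Asymptotic calibration `c_m` of the generalized-mean test of level `α` for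
`r ≤ -1`: `c_m = α/(1 + α log m)` if `r = -1` and `c_m = α m^{1/|r| - 1}` if `r < -1`. -/
noncomputable def cal (r α : ℝ) (m : ℕ) : ℝ :=
  if r = -1 then α / (1 + α * Real.log m) else α * (m : ℝ) ^ (1 / |r| - 1)

/-!
With probability tending to one the common factor satisfies `Z₀ > -ε √(2 log m)`, and some
signal coordinate has `Zᵢ ≥ t √(2 log m)` with `t² < γ`: about `m^γ` signals each exceed that
level with probability `≈ m^{-t²}`. On this event the corresponding p-value is at most
`Φ(-δ √(2 log m)) ≤ m^{-δ²}`, where `δ = √c - √ρ ε + √(1-ρ) t > 1` is possible exactly above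
the detection boundary. Since `r < 0`, one p-value `p` contributes `p^r / m` to the mean of the
`p^r`, and `m^{-δ²} ≤ α / (m (1 + α log m))` already makes this exceed `c_m^r`.
-/

open Real Set
open scoped ENNReal Topology

lemma Phi_eq_cdf : Phi = cdf (gaussianReal 0 1) := funext fun x => (cdf_eq_real _ x).symm

lemma Phi_pos (x : ℝ) : 0 < Phi x := by
  refine ENNReal.toReal_pos (fun h => ?_) (measure_ne_top _ _)
  simpa using gaussianReal_absolutelyContinuous' 0 one_ne_zero h

lemma Phi_neg_le_exp {w : ℝ} (hw : 0 ≤ w) : Phi (-w) ≤ exp (-w ^ 2 / 2) := by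
  have h := measure_le_le_exp_mul_mgf (μ := gaussianReal 0 1) (X := id) (-w) (neg_nonpos.2 hw)
    (integrable_exp_mul_gaussianReal (-w))
  rw [mgf_id_gaussianReal, ← exp_add] at h
  convert h using 2
  · rfl
  · push_cast
    ring

lemma gaussianReal_real_Ici_ge {u : ℝ} (hu : 0 ≤ u) :
    (√(2 * π))⁻¹ * exp (-(u + 1) ^ 2 / 2) ≤ (gaussianReal 0 1).real (Ici u) := by
  rw [measureReal_def, ← ENNReal.ofReal_le_iff_le_toReal (measure_ne_top _ _),
    gaussianReal_apply 0 one_ne_zero]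
  calc ENNReal.ofReal ((√(2 * π))⁻¹ * exp (-(u + 1) ^ 2 / 2))
      = ∫⁻ _ in Icc u (u + 1), ENNReal.ofReal ((√(2 * π))⁻¹ * exp (-(u + 1) ^ 2 / 2)) := by
        simp
    _ ≤ ∫⁻ x in Icc u (u + 1), gaussianPDF 0 1 x := by
        refine setLIntegral_mono (measurable_gaussianPDF 0 1) fun x ⟨hux, hxu⟩ => ?_
        simp only [gaussianPDF, gaussianPDFReal, NNReal.coe_one, mul_one, sub_zero]
        gcongr
        nlinarith
    _ ≤ ∫⁻ x in Ici u, gaussianPDF 0 1 x := lintegral_mono_set Icc_subset_Ici_self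

section Model

variable {p : ℝ}

lemma isProbabilityMeasure_bern (h0 : 0 ≤ p) (h1 : p ≤ 1) : IsProbabilityMeasure (bern p) := by
  constructor
  simp only [bern, Measure.add_apply, Measure.smul_apply, measure_univ, smul_eq_mul, mul_one]
  rw [← ENNReal.ofReal_add h0 (by linarith)]
  norm_num

lemma bern_singleton_one : bern p {1} = ENNReal.ofReal p := by
  simp [bern]

variable (m : ℕ) [IsProbabilityMeasure (bern p)]

instance : IsProbabilityMeasure (model m p) := by
  unfold model; infer_instance

lemma model_common_le (v : ℝ) :
    model m p {ω | ω.1 0 ≤ v} = ENNReal.ofReal (Phi v) := by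
  rw [Phi_eq_cdf, ofReal_cdf]
  exact ((measurePreserving_eval (fun _ : Fin (m + 1) => gaussianReal 0 1) 0).comp
    measurePreserving_fst).measure_preimage
    (measurableSet_Iic (a := v)).nullMeasurableSet

lemma measurePreserving_signal_pairs :
    MeasurePreserving (fun ω : (Fin (m + 1) → ℝ) × (Fin m → ℝ) => fun i => (ω.1 i.succ, ω.2 i))
      (model m p) (Measure.pi fun _ : Fin m => (gaussianReal 0 1).prod (bern p)) := by
  have htail := measurePreserving_snd.comp
    (measurePreserving_piFinSuccAbove (fun _ : Fin (m + 1) => gaussianReal 0 1) 0)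
  exact ((measurePreserving_arrowProdEquivProdArrow ℝ ℝ (Fin m) _ _).symm _).comp
    (htail.prod (MeasurePreserving.id _))

lemma model_no_strong_signal (u : ℝ) :
    model m p {ω | ∀ i : Fin m, ¬(ω.2 i = 1 ∧ u ≤ ω.1 i.succ)}
      = (1 - gaussianReal 0 1 (Ici u) * ENNReal.ofReal p) ^ m := by
  have hset : {ω : (Fin (m + 1) → ℝ) × (Fin m → ℝ) | ∀ i : Fin m, ¬(ω.2 i = 1 ∧ u ≤ ω.1 i.succ)}
      = (fun ω : (Fin (m + 1) → ℝ) × (Fin m → ℝ) => fun i => (ω.1 i.succ, ω.2 i)) ⁻¹'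
        univ.pi fun _ => (Ici u ×ˢ {1})ᶜ := by
    ext ω; simp [and_comm]
  have hmeas : MeasurableSet (Ici u ×ˢ ({1} : Set ℝ)) :=
    measurableSet_Ici.prod (measurableSet_singleton 1)
  rw [hset, (measurePreserving_signal_pairs m).measure_preimage
      (MeasurableSet.univ_pi fun _ => hmeas.compl).nullMeasurableSet,
    Measure.pi_pi, measure_compl hmeas (measure_ne_top _ _), measure_univ, Measure.prod_prod,
    bern_singleton_one, Finset.prod_const, Finset.card_univ, Fintype.card_fin]

end Model

lemma rpow_one_div_le_of_rpow_le_of_neg {r a s : ℝ} (hr : r < 0) (ha : 0 < a) (h : a ^ r ≤ s) :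
    s ^ (1 / r) ≤ a :=
  calc s ^ (1 / r) ≤ (a ^ r) ^ (1 / r) :=
        rpow_le_rpow_of_nonpos (rpow_pos_of_pos ha r) h (one_div_neg.2 hr).le
    _ = a := by rw [← rpow_mul ha.le, mul_one_div_cancel hr.ne, rpow_one]

section Calibration

variable {r α : ℝ} {m : ℕ}

lemma cal_pos (hα : 0 < α) (hm : 0 < m) : 0 < cal r α m := by
  have hL : 0 ≤ log m := log_natCast_nonneg m
  unfold cal
  split_ifs <;> positivity

lemma natCast_mul_cal_rpow_le (hr : r ≤ -1) (hα : 0 < α) (hm : 0 < m) :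
    m * cal r α m ^ r ≤ (α / (m * (1 + α * log m))) ^ r := by
  have hm0 : (0 : ℝ) < m := Nat.cast_pos.2 hm
  have hL : 0 ≤ log m := log_natCast_nonneg m
  rcases hr.eq_or_lt with rfl | hlt
  · rw [cal, if_pos rfl, rpow_neg_one, rpow_neg_one]
    field_simp
    rfl
  · have hr0 : r < 0 := by linarith
    have hcal : cal r α m ^ r = α ^ r * (m : ℝ) ^ (-1 - r) := by
      rw [cal, if_neg hlt.ne, abs_of_neg hr0, mul_rpow hα.le (by positivity), ← rpow_mul hm0.le]
      congr 2
      rw [sub_mul, div_mul_eq_mul_div, one_mul, div_neg, div_self hr0.ne]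
    rw [hcal, div_rpow hα.le (by positivity)]
    calc (m : ℝ) * (α ^ r * (m : ℝ) ^ (-1 - r)) = α ^ r / (m : ℝ) ^ r := by
          rw [mul_left_comm, ← rpow_one_add' hm0.le (by linarith), div_eq_mul_inv,
            ← rpow_neg hm0.le]
          ring_nf
      _ ≤ α ^ r / ((m : ℝ) * (1 + α * log m)) ^ r := by
          refine div_le_div_of_nonneg_left (by positivity) (by positivity) ?_
          exact rpow_le_rpow_of_nonpos hm0 (le_mul_of_one_le_right hm0.le (by nlinarith)) hr0.le

lemma genMean_le_cal_of_le (hr : r ≤ -1) (hα : 0 < α) (p : Fin m → ℝ) (hp : ∀ j, 0 < p j)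
    {i : Fin m} (hi : p i ≤ α / (m * (1 + α * log m))) :
    ((1 / m : ℝ) * ∑ j, p j ^ r) ^ (1 / r) ≤ cal r α m := by
  have hm : 0 < m := i.pos
  have hm0 : (0 : ℝ) < m := Nat.cast_pos.2 hm
  refine rpow_one_div_le_of_rpow_le_of_neg (by linarith) (cal_pos hα hm) ?_
  rw [one_div_mul_eq_div, le_div_iff₀ hm0, mul_comm]
  calc (m : ℝ) * cal r α m ^ r ≤ (α / (m * (1 + α * log m))) ^ r :=
        natCast_mul_cal_rpow_le hr hα hm
    _ ≤ p i ^ r := rpow_le_rpow_of_nonpos (hp i) hi (by linarith)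
    _ ≤ ∑ j, p j ^ r :=
        Finset.single_le_sum (fun j _ => (rpow_pos_of_pos (hp j) r).le) (Finset.mem_univ i)

end Calibration

lemma tendsto_affine_mul_exp_neg_atTop (a b : ℝ) {d : ℝ} (hd : 0 < d) :
    Tendsto (fun x => (a + b * x) * exp (-(d * x))) atTop (𝓝 0) := by
  have hdx : Tendsto (fun x => d * x) atTop atTop := tendsto_id.const_mul_atTop hd
  have h0 := (tendsto_pow_mul_exp_neg_atTop_nhds_zero 0).comp hdx
  have h1 := (tendsto_pow_mul_exp_neg_atTop_nhds_zero 1).comp hdx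
  convert (h0.const_mul a).add (h1.const_mul (b / d)) using 1
  · ext x
    simp only [Function.comp_apply, pow_zero, pow_one, one_mul]
    field_simp
  · simp

lemma tendsto_mul_sub_mul_sqrt_atTop {a : ℝ} (ha : 0 < a) (b c : ℝ) :
    Tendsto (fun x => a * x - b * √x - c) atTop atTop := by
  have h : Tendsto (fun x => √x * (a * √x - b) - c) atTop atTop :=
    tendsto_atTop_add_const_right _ _ (tendsto_sqrt_atTop.atTop_mul_atTop₀
      (tendsto_atTop_add_const_right _ _ (tendsto_sqrt_atTop.const_mul_atTop ha)))
  refine h.congr' ?_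
  filter_upwards [eventually_ge_atTop 0] with x hx
  rw [mul_sub, mul_left_comm, mul_self_sqrt hx, mul_comm b]

lemma natCast_rpow_le_one_of_nonpos (m : ℕ) {s : ℝ} (hs : s ≤ 0) : (m : ℝ) ^ s ≤ 1 := by
  rcases m.eq_zero_or_pos with rfl | hm
  · simpa using zero_rpow_le_one s
  · exact rpow_le_one_of_one_le_of_nonpos (by exact_mod_cast hm) hs

lemma tendsto_one_sub_pow_of_tendsto_mul_atTop {a : ℕ → ℝ} (h1 : ∀ m, a m ≤ 1)
    (h : Tendsto (fun m => m * a m) atTop atTop) :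
    Tendsto (fun m => (1 - a m) ^ m) atTop (𝓝 0) := by
  refine squeeze_zero (fun m => pow_nonneg (sub_nonneg.2 (h1 m)) m) (fun m => ?_)
    (tendsto_exp_neg_atTop_nhds_zero.comp h)
  calc (1 - a m) ^ m ≤ exp (-a m) ^ m :=
        pow_le_pow_left₀ (sub_nonneg.2 (h1 m)) (by linarith [add_one_le_exp (-a m)]) m
    _ = exp (-(m * a m)) := by rw [← exp_nat_mul]; ring_nf

section Asymptotics

variable {α γ t : ℝ}

lemma tendsto_log_natCast_atTop : Tendsto (fun m : ℕ => log m) atTop atTop :=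
  tendsto_log_atTop.comp tendsto_natCast_atTop_atTop

lemma eventually_Phi_neg_le_threshold (hα : 0 < α) {δ : ℝ} (hδ : 1 < δ) :
    ∀ᶠ m : ℕ in atTop, Phi (-(δ * √(2 * log m))) ≤ α / (m * (1 + α * log m)) := by
  have hlim := (tendsto_affine_mul_exp_neg_atTop 1 α (d := δ ^ 2 - 1) (by nlinarith)).comp
    tendsto_log_natCast_atTop
  filter_upwards [hlim.eventually (eventually_le_nhds hα), eventually_gt_atTop 0] with m hm hm_pos
  have hm0 : (0 : ℝ) < m := Nat.cast_pos.2 hm_pos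
  have hL : 0 ≤ log m := log_natCast_nonneg m
  refine (Phi_neg_le_exp (by positivity)).trans ?_
  rw [le_div_iff₀ (by positivity)]
  calc exp (-(δ * √(2 * log m)) ^ 2 / 2) * (m * (1 + α * log m))
      = (1 + α * log m) * exp (-((δ ^ 2 - 1) * log m)) := by
        rw [mul_pow, sq_sqrt (by positivity), ← exp_log hm0, log_exp, ← mul_assoc, ← exp_add,
          mul_comm]
        congr 2
        ring
    _ ≤ α := hm

lemma tendsto_rpow_mul_gaussianReal_Ici_atTop (ht : 0 ≤ t) (htγ : t ^ 2 < γ) :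
    Tendsto (fun m : ℕ => (m : ℝ) ^ γ * (gaussianReal 0 1).real (Ici (t * √(2 * log m))))
      atTop atTop := by
  have hlow : Tendsto (fun m : ℕ => (√(2 * π))⁻¹ *
      exp ((γ - t ^ 2) * log m - t * √2 * √(log m) - 1 / 2)) atTop atTop :=
    ((tendsto_exp_atTop.comp (tendsto_mul_sub_mul_sqrt_atTop (by linarith) _ _)).comp
      tendsto_log_natCast_atTop).const_mul_atTop (by positivity)
  refine tendsto_atTop_mono' atTop ?_ hlow
  filter_upwards [eventually_gt_atTop 0] with m hm
  have hm0 : (0 : ℝ) < m := Nat.cast_pos.2 hm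
  have hL : 0 ≤ log m := log_natCast_nonneg m
  calc (√(2 * π))⁻¹ * exp ((γ - t ^ 2) * log m - t * √2 * √(log m) - 1 / 2)
      = (m : ℝ) ^ γ * ((√(2 * π))⁻¹ * exp (-(t * √(2 * log m) + 1) ^ 2 / 2)) := by
        rw [rpow_def_of_pos hm0, mul_left_comm, ← exp_add, sqrt_mul' 2 hL]
        congr 2
        ring_nf
        rw [sq_sqrt zero_le_two, sq_sqrt hL]
        ring
    _ ≤ (m : ℝ) ^ γ * (gaussianReal 0 1).real (Ici (t * √(2 * log m))) := by
        gcongr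
        exact gaussianReal_real_Ici_ge (by positivity)

end Asymptotics

lemma tendsto_measure_one_of_compl_subset_union {ι : Type*} {l : Filter ι} {Ω : ι → Type*}
    [∀ i, MeasurableSpace (Ω i)] {μ : ∀ i, Measure (Ω i)} [∀ i, IsProbabilityMeasure (μ i)]
    {A B C : ∀ i, Set (Ω i)} (hA : Tendsto (fun i => μ i (A i)) l (𝓝 0))
    (hB : Tendsto (fun i => μ i (B i)) l (𝓝 0)) (h : ∀ᶠ i in l, (C i)ᶜ ⊆ A i ∪ B i) :
    Tendsto (fun i => μ i (C i)) l (𝓝 1) := by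
  have hlo : Tendsto (fun i => 1 - (μ i (A i) + μ i (B i))) l (𝓝 1) := by
    have h := ENNReal.Tendsto.sub tendsto_const_nhds (add_zero (0 : ℝ≥0∞) ▸ hA.add hB)
      (Or.inl ENNReal.one_ne_top)
    rwa [tsub_zero] at h
  refine tendsto_of_tendsto_of_tendsto_of_le_of_le' hlo tendsto_const_nhds ?_
    (Eventually.of_forall fun i => prob_le_one)
  filter_upwards [h] with i hi
  rw [tsub_le_iff_right]
  calc 1 = μ i (C i ∪ (C i)ᶜ) := by rw [union_compl_self, measure_univ]
    _ ≤ μ i (C i) + μ i (C i)ᶜ := measure_union_le _ _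
    _ ≤ μ i (C i) + (μ i (A i) + μ i (B i)) := by
        gcongr
        exact (measure_mono hi).trans (measure_union_le _ _)

lemma isProbabilityMeasure_bern_natCast_rpow (m : ℕ) {s : ℝ} (hs : s ≤ 0) :
    IsProbabilityMeasure (bern ((m : ℝ) ^ s)) :=
  isProbabilityMeasure_bern (by positivity) (natCast_rpow_le_one_of_nonpos m hs)

lemma tendsto_model_common_le_neg {p : ℕ → ℝ} [∀ m, IsProbabilityMeasure (bern (p m))] {ε : ℝ}
    (hε : 0 < ε) :
    Tendsto (fun m : ℕ => model m (p m) {ω | ω.1 0 ≤ -(ε * √(2 * log m))}) atTop (𝓝 0) := by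
  have harg : Tendsto (fun m : ℕ => -(ε * √(2 * log m))) atTop atBot :=
    tendsto_neg_atTop_atBot.comp ((tendsto_sqrt_atTop.comp
      (tendsto_log_natCast_atTop.const_mul_atTop two_pos)).const_mul_atTop hε)
  simp_rw [model_common_le, Phi_eq_cdf]
  simpa using ENNReal.tendsto_ofReal ((tendsto_cdf_atBot _).comp harg)

lemma tendsto_model_no_strong_signal {γ t : ℝ} (hγ : γ ≤ 1) (ht : 0 ≤ t) (htγ : t ^ 2 < γ) :
    Tendsto (fun m : ℕ => model m ((m : ℝ) ^ (γ - 1))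
      {ω | ∀ i : Fin m, ¬(ω.2 i = 1 ∧ t * √(2 * log m) ≤ ω.1 i.succ)}) atTop (𝓝 0) := by
  have := fun m : ℕ => isProbabilityMeasure_bern_natCast_rpow m (s := γ - 1) (by linarith)
  set q : ℕ → ℝ := fun m => (gaussianReal 0 1).real (Ici (t * √(2 * log m)))
  have hpq : ∀ m : ℕ, (m : ℝ) ^ (γ - 1) * q m ≤ 1 := fun m =>
    mul_le_one₀ (natCast_rpow_le_one_of_nonpos m (by linarith)) measureReal_nonneg
      measureReal_le_one
  have hmul : Tendsto (fun m : ℕ => m * ((m : ℝ) ^ (γ - 1) * q m)) atTop atTop := by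
    refine (tendsto_rpow_mul_gaussianReal_Ici_atTop ht htγ).congr' ?_
    filter_upwards [eventually_gt_atTop 0] with m hm
    have hm0 : (m : ℝ) ≠ 0 := (Nat.cast_pos.2 hm).ne'
    rw [rpow_sub_one hm0, ← mul_assoc, mul_div_cancel₀ _ hm0]
  refine (ENNReal.tendsto_ofReal (tendsto_one_sub_pow_of_tendsto_mul_atTop hpq hmul)).congr'
    ?_ |>.trans (by simp)
  filter_upwards with m
  rw [model_no_strong_signal, ENNReal.ofReal_pow (sub_nonneg.2 (hpq m)),
    ENNReal.ofReal_sub _ (by positivity), ENNReal.ofReal_one, ENNReal.ofReal_mul (by positivity),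
    ofReal_measureReal, mul_comm]

lemma exists_margin_of_detection {ρ c γ : ℝ} (hγ : 0 < γ)
    (hdet : 1 - √(γ * (1 - ρ)) < √c) :
    ∃ ε t : ℝ, 0 < ε ∧ 0 ≤ t ∧ t ^ 2 < γ ∧ 1 < √c - √ρ * ε + √(1 - ρ) * t := by
  have hlim : Tendsto (fun x : ℝ => √c - √ρ * x + (1 - x) * √(γ * (1 - ρ))) (𝓝[>] 0)
      (𝓝 (√c + √(γ * (1 - ρ)))) :=
    ((by fun_prop : Continuous fun x : ℝ => √c - √ρ * x + (1 - x) * √(γ * (1 - ρ))).tendsto'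
      0 _ (by ring)).mono_left nhdsWithin_le_nhds
  have hsum : 1 < √c + √(γ * (1 - ρ)) := by linarith
  obtain ⟨x, hx, hx0, hx1⟩ :=
    ((hlim.eventually (lt_mem_nhds hsum)).and (Ioo_mem_nhdsGT one_pos)).exists
  refine ⟨x, (1 - x) * √γ, hx0, by nlinarith [sqrt_nonneg γ], ?_, ?_⟩
  · rw [mul_pow, sq_sqrt hγ.le]
    nlinarith [mul_pos (mul_pos hx0 (by linarith : (0:ℝ) < 2 - x)) hγ]
  · rwa [mul_left_comm, ← sqrt_mul' _ hγ.le, mul_comm (1 - ρ)]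

lemma pval_le_Phi {m : ℕ} {μs ρ u v : ℝ} {ω : (Fin (m + 1) → ℝ) × (Fin m → ℝ)} {i : Fin m}
    (hB : ω.2 i = 1) (h0 : -v ≤ ω.1 0) (hi : u ≤ ω.1 i.succ) :
    pval m μs ρ ω i ≤ Phi (-(μs - √ρ * v + √(1 - ρ) * u)) := by
  rw [pval, Phi_eq_cdf, hB]
  refine monotone_cdf _ ?_
  nlinarith [mul_le_mul_of_nonneg_left h0 (sqrt_nonneg ρ),
    mul_le_mul_of_nonneg_left hi (sqrt_nonneg (1 - ρ))]

lemma eventually_genMean_le_cal_of_strong_signal {r α ρ c ε t : ℝ} (hr : r ≤ -1) (hα : 0 < α)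
    (hδ : 1 < √c - √ρ * ε + √(1 - ρ) * t) :
    ∀ᶠ m : ℕ in atTop, ∀ ω : (Fin (m + 1) → ℝ) × (Fin m → ℝ), -(ε * √(2 * log m)) < ω.1 0 →
      (∃ i, ω.2 i = 1 ∧ t * √(2 * log m) ≤ ω.1 i.succ) →
      ((1 / m : ℝ) * ∑ i, pval m (√(2 * c * log m)) ρ ω i ^ r) ^ (1 / r) ≤ cal r α m := by
  filter_upwards [eventually_Phi_neg_le_threshold hα hδ] with m hm ω h0 ⟨i, hB, hi⟩
  refine genMean_le_cal_of_le hr hα _ (fun j => Phi_pos _) (i := i)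
    ((pval_le_Phi hB h0.le hi).trans (le_of_eq_of_le ?_ hm))
  rw [show 2 * c * log m = c * (2 * log m) by ring, sqrt_mul' c (by positivity)]
  ring_nf

theorem stmt_17_general (r ρ α c γ : ℝ) (hr : r ≤ -1) (hα : 0 < α) (hγ : γ ∈ Set.Ioo (0:ℝ) 1)
    (hdet : 1 - Real.sqrt (γ * (1 - ρ)) < Real.sqrt c) :
    Tendsto (fun m : ℕ =>
        model m ((m : ℝ) ^ (γ - 1)) {ω | ((1 / m : ℝ) * ∑ i : Fin m,
            pval m (Real.sqrt (2 * c * Real.log m)) ρ ω i ^ r) ^ (1 / r) ≤ cal r α m})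
      atTop (nhds (1 : ENNReal)) := by
  obtain ⟨ε, t, hε, ht, htγ, hδ⟩ := exists_margin_of_detection hγ.1 hdet
  have := fun m : ℕ => isProbabilityMeasure_bern_natCast_rpow m (s := γ - 1) (by linarith [hγ.2])
  refine tendsto_measure_one_of_compl_subset_union (tendsto_model_common_le_neg hε)
    (tendsto_model_no_strong_signal hγ.2.le ht htγ) ?_
  filter_upwards [eventually_genMean_le_cal_of_strong_signal hr hα hδ] with m hm ω hω
  by_contra hAB
  simp only [mem_union, mem_ofPred_eq, not_or, not_le, not_forall, not_not] at hAB
  exact hω (hm ω hAB.1 hAB.2)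

/-- for `r ≤ -1`, `ρ ∈ [0,1]`, strong sparse signals `μ_m = √(2c log m)`,
`π_m = m^{γ-1}` with `γ ∈ (0,1)` and `√c > 1 - √(γ(1-ρ))` (above the detection
boundary), the asymptotic power of the calibrated generalized-mean test is one. -/
theorem stmt_17 (r ρ α c γ : ℝ) (hr : r ≤ -1) (hρ : ρ ∈ Set.Icc (0:ℝ) 1) (hα : 0 < α)
    (hc : 0 < c) (hγ : γ ∈ Set.Ioo (0:ℝ) 1)
    (hdet : 1 - Real.sqrt (γ * (1 - ρ)) < Real.sqrt c) :
    Tendsto (fun m : ℕ =>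
        model m ((m : ℝ) ^ (γ - 1)) {ω | ((1 / m : ℝ) * ∑ i : Fin m,
            pval m (Real.sqrt (2 * c * Real.log m)) ρ ω i ^ r) ^ (1 / r) ≤ cal r α m})
      atTop (nhds (1 : ENNReal)) :=
  stmt_17_general r ρ α c γ hr hα hγ hdet
end
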